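/- The lazy potential satisfies the 3-competitiveness update condition for an active request of HARMONIC with two servers: let (M,d) be a metric space and let x, y, z, r ∈ M be pairwise distinct. Then Φ(x,y,z) + 3·d(z,r) − 2·d(x,r)·d(z,r)/(d(x,r)+d(z,r)) − (d(x,r)·Φ(x,y,r) + d(z,r)·Φ(z,y,r))/(d(x,r)+d(z,r)) ≥ 0, where Φ(u,v,w) := 2·d(u,v)·(2·d(u,w)+d(v,w))/(d(u,v)+d(u,w)+d(v,w)). -/

import Mathlib

/-!
Write `a = d(x,y)`, `b = d(x,z)`, `c = d(y,z)`, `p = d(x,r)`, `s = d(z,r)`. Two estimates on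
the lazy potential do the work: `Φ(z,y,r) ≤ c + 2s`, and moving the third point of `Φ(x,y,·)`
from `z` to `r` raises it by at most `4as/(a+b+c)`. Multiplied by `p + s`, the theorem then
reduces to `c + 4ap/(a+b+c) ≤ Φ(x,y,z) + p + s`, and `a+b+c` times the difference of the two
sides is `(b+c)(a+b-c) + (p+s-b)(b+c-a) + 2a(b+s-p)`, a sum of products of triangle-inequality
slacks.
-/

/-- The lazy potential for HARMONIC with two servers:
`Φ(u,v,w) = 2·d(u,v)·(2·d(u,w) + d(v,w)) / (d(u,v) + d(u,w) + d(v,w))`. -/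
noncomputable def lazyPhi {M : Type*} [MetricSpace M] (u v w : M) : ℝ :=
  2 * dist u v * (2 * dist u w + dist v w) / (dist u v + dist u w + dist v w)

section

variable {M : Type*} [MetricSpace M]

theorem lazyPhi_nonneg (u v w : M) : 0 ≤ lazyPhi u v w := by
  unfold lazyPhi
  positivity

theorem lazyPhi_le_dist_add_two_mul_dist (u v w : M) :
    lazyPhi u v w ≤ dist u v + 2 * dist u w := by
  have h₁ : 0 ≤ dist u v + dist u w - dist v w := by linarith [dist_triangle_left v w u]
  have h₂ : 0 ≤ dist u w + dist v w - dist u v := by linarith [dist_triangle_right u v w]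
  refine div_le_of_le_mul₀ (by positivity) (by positivity) ?_
  linarith [mul_nonneg (dist_nonneg (x := u) (y := v)) h₁,
    mul_nonneg (dist_nonneg (x := u) (y := w)) h₂]

theorem lazyPhi_le_lazyPhi_add (u v w w' : M) :
    lazyPhi u v w' ≤
      lazyPhi u v w + 4 * dist u v * dist w w' / (dist u v + dist u w + dist v w) := by
  rcases (dist_nonneg : 0 ≤ dist u v).eq_or_lt with huv | huv
  · simp [lazyPhi, ← huv]
  have h₁ : 0 ≤ dist u w + dist w w' - dist u w' := by linarith [dist_triangle u w w']
  have h₂ : 0 ≤ dist v w + dist w w' - dist v w' := by linarith [dist_triangle v w w']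
  have h₃ : 0 ≤ dist v w' + dist w w' - dist v w := by linarith [dist_triangle_right v w w']
  have h₄ : 0 ≤ dist u w' + dist v w' - dist u v := by linarith [dist_triangle_right u v w']
  have key : (2 * dist u w' + dist v w') * (dist u v + dist u w + dist v w) ≤
      (2 * dist u w + dist v w + 2 * dist w w') * (dist u v + dist u w' + dist v w') := by
    linarith [mul_nonneg huv.le h₁, mul_nonneg huv.le h₂,
      mul_nonneg (dist_nonneg (x := v) (y := w')) h₁,
      mul_nonneg (dist_nonneg (x := u) (y := w')) h₃,
      mul_nonneg (dist_nonneg (x := w) (y := w')) h₄]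
  unfold lazyPhi
  rw [← add_div, div_le_div_iff₀ (by positivity) (by positivity)]
  linarith [mul_le_mul_of_nonneg_left key (by positivity : (0 : ℝ) ≤ 2 * dist u v)]

theorem dist_add_div_le_lazyPhi_add (u v w w' : M) :
    dist v w + 4 * dist u v * dist u w' / (dist u v + dist u w + dist v w) ≤
      lazyPhi u v w + dist u w' + dist w w' := by
  have h₁ : 0 ≤ dist u v + dist u w - dist v w := by linarith [dist_triangle_left v w u]
  have h₂ : 0 ≤ dist u w + dist v w - dist u v := by linarith [dist_triangle_right u v w]
  have h₃ : 0 ≤ dist u w' + dist w w' - dist u w := by linarith [dist_triangle_right u w w']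
  have h₄ : 0 ≤ dist u w + dist w w' - dist u w' := by linarith [dist_triangle u w w']
  rcases (by positivity : (0 : ℝ) ≤ dist u v + dist u w + dist v w).eq_or_lt with hS | hS
  · simp only [lazyPhi, ← hS, div_zero]
    linarith
  have expand : lazyPhi u v w + dist u w' + dist w w'
      - (dist v w + 4 * dist u v * dist u w' / (dist u v + dist u w + dist v w)) =
      ((dist u w + dist v w) * (dist u v + dist u w - dist v w)
        + (dist u w' + dist w w' - dist u w) * (dist u w + dist v w - dist u v)
        + 2 * dist u v * (dist u w + dist w w' - dist u w'))
      / (dist u v + dist u w + dist v w) := by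
    unfold lazyPhi
    field_simp
    ring
  rw [← sub_nonneg, expand]
  positivity

theorem dist_mul_lazyPhi_add_le (u v w w' : M) :
    dist u w' * lazyPhi u v w' + dist w w' * dist v w ≤
      (dist u w' + dist w w') * (lazyPhi u v w + dist w w') := by
  have hmove := mul_le_mul_of_nonneg_left (lazyPhi_le_lazyPhi_add u v w w')
    (dist_nonneg (x := u) (y := w'))
  have hslack := mul_le_mul_of_nonneg_left (dist_add_div_le_lazyPhi_add u v w w')
    (dist_nonneg (x := w) (y := w'))
  have hcancel : dist u w' * (4 * dist u v * dist w w' / (dist u v + dist u w + dist v w)) =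
      dist w w' * (4 * dist u v * dist u w' / (dist u v + dist u w + dist v w)) := by
    ring
  linarith

end

theorem lazyPhi_active_request_general {M : Type*} [MetricSpace M] (x y z r : M) :
    lazyPhi x y z + 3 * dist z r
      - 2 * dist x r * dist z r / (dist x r + dist z r)
      - (dist x r * lazyPhi x y r + dist z r * lazyPhi z y r)
          / (dist x r + dist z r) ≥ 0 := by
  have hfar := lazyPhi_le_dist_add_two_mul_dist z y r
  rw [dist_comm z y] at hfar
  have hnear := dist_mul_lazyPhi_add_le x y z r
  have hbound : (2 * dist x r * dist z r + (dist x r * lazyPhi x y r + dist z r * lazyPhi z y r))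
      / (dist x r + dist z r) ≤ lazyPhi x y z + 3 * dist z r :=
    div_le_of_le_mul₀ (by positivity)
      (by linarith [lazyPhi_nonneg x y z, dist_nonneg (x := z) (y := r)])
      (by linarith [mul_le_mul_of_nonneg_left hfar (dist_nonneg (x := z) (y := r))])
  rw [add_div] at hbound
  linarith

/-- Update condition of the lazy potential for an active request of HARMONIC
with two servers: the algorithm's servers are at `x, z`, the adversary's at
`y, z`; the adversary moves its server from `z` to `r` and requests `r`. -/
theorem lazyPhi_active_request {M : Type*} [MetricSpace M] (x y z r : M)
    (hxy : x ≠ y) (hxz : x ≠ z) (hxr : x ≠ r)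
    (hyz : y ≠ z) (hyr : y ≠ r) (hzr : z ≠ r) :
    lazyPhi x y z + 3 * dist z r
      - 2 * dist x r * dist z r / (dist x r + dist z r)
      - (dist x r * lazyPhi x y r + dist z r * lazyPhi z y r)
          / (dist x r + dist z r) ≥ 0 :=
  lazyPhi_active_request_general x y z r
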